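/- Let (L, Δ, α) be a Hom-coassociative coalgebra over K with (α ⊗ α)∘Δ = Δ∘α, let φ_L : L → L be an α-coderivation of Δ, and let R : L → L be a Rota-Baxter operator of weight λ = −1 on L satisfying R∘α = α∘R and φ_L∘R = R∘φ_L. Define Δ̃ = (R ⊗ 1_L)∘Δ − τ∘(1_L ⊗ R)∘Δ − Δ : L → L ⊗ L. Then (L, Δ̃, φ_L, α) is a Hom-pre-Lie CoDer pair: (L, Δ̃, α) is a Hom-pre-Lie coalgebra and Δ̃∘φ_L = (φ_L ⊗ α)∘Δ̃ + (α ⊗ φ_L)∘Δ̃. -/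
import Mathlib


open scoped TensorProduct

/-- The transposition τ¹² : x⊗y⊗z ↦ y⊗x⊗z on `L ⊗ (L ⊗ L)`. -/
noncomputable def tau12 (K : Type*) [Field K] (L : Type*) [AddCommGroup L] [Module K L] :
    L ⊗[K] (L ⊗[K] L) →ₗ[K] L ⊗[K] (L ⊗[K] L) :=
  (TensorProduct.assoc K L L L).toLinearMap
    ∘ₗ TensorProduct.map (TensorProduct.comm K L L).toLinearMap (LinearMap.id : L →ₗ[K] L)
    ∘ₗ (TensorProduct.assoc K L L L).symm.toLinearMap

/-- A Hom-coassociative coalgebra: (α ⊗ Δ)∘Δ = (Δ ⊗ α)∘Δ, identifying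
(L ⊗ L) ⊗ L ≅ L ⊗ (L ⊗ L) via the associator. -/
def IsHomCoassociative {K : Type*} [Field K] {L : Type*} [AddCommGroup L] [Module K L]
    (Δ : L →ₗ[K] L ⊗[K] L) (α : L →ₗ[K] L) : Prop :=
  TensorProduct.map α Δ ∘ₗ Δ =
    (TensorProduct.assoc K L L L).toLinearMap ∘ₗ TensorProduct.map Δ α ∘ₗ Δ

/-- A Rota-Baxter operator of weight `w` on the Hom-coalgebra (L, Δ, α):
(R ⊗ R)∘Δ = (1 ⊗ R)∘Δ∘R + (R ⊗ 1)∘Δ∘R + w·Δ∘R. -/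
def IsRotaBaxterOp {K : Type*} [Field K] {L : Type*} [AddCommGroup L] [Module K L]
    (Δ : L →ₗ[K] L ⊗[K] L) (R : L →ₗ[K] L) (w : K) : Prop :=
  TensorProduct.map R R ∘ₗ Δ =
    TensorProduct.map (LinearMap.id : L →ₗ[K] L) R ∘ₗ Δ ∘ₗ R
      + TensorProduct.map R (LinearMap.id : L →ₗ[K] L) ∘ₗ Δ ∘ₗ R
      + w • (Δ ∘ₗ R)

/-- A Hom-pre-Lie coalgebra: (1 − τ¹²)∘((Δ₀ ⊗ α)∘Δ₀ − (α ⊗ Δ₀)∘Δ₀) = 0. -/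
def IsHomPreLieCoalgebra {K : Type*} [Field K] {L : Type*} [AddCommGroup L] [Module K L]
    (Δ₀ : L →ₗ[K] L ⊗[K] L) (α : L →ₗ[K] L) : Prop :=
  (LinearMap.id - tau12 K L) ∘ₗ
    ((TensorProduct.assoc K L L L).toLinearMap ∘ₗ TensorProduct.map Δ₀ α ∘ₗ Δ₀
      - TensorProduct.map α Δ₀ ∘ₗ Δ₀) = 0


/-- φ is an α-coderivation of Δ. -/
def IsCoderivation {K : Type*} [Field K] {L : Type*} [AddCommGroup L] [Module K L]
    (Δ : L →ₗ[K] L ⊗[K] L) (α φ : L →ₗ[K] L) : Prop :=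
  Δ ∘ₗ φ = TensorProduct.map φ α ∘ₗ Δ + TensorProduct.map α φ ∘ₗ Δ

/-- A Hom-pre-Lie CoDer pair (L, Δ₀, φ, α). -/
def IsHomPreLieCoDerPair {K : Type*} [Field K] {L : Type*} [AddCommGroup L] [Module K L]
    (Δ₀ : L →ₗ[K] L ⊗[K] L) (φ α : L →ₗ[K] L) : Prop :=
  IsHomPreLieCoalgebra Δ₀ α ∧ IsCoderivation Δ₀ α φ

open TensorProduct LinearMap in
private lemma rb_map_sub_left {K : Type*} [Field K] {M N P Q : Type*}
    [AddCommGroup M] [Module K M] [AddCommGroup N]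
    [Module K N] [AddCommGroup P] [Module K P] [AddCommGroup Q] [Module K Q]
    (f g : M →ₗ[K] P) (h : N →ₗ[K] Q) :
    TensorProduct.map (f - g) h = TensorProduct.map f h - TensorProduct.map g h := by
  apply TensorProduct.ext'; intro x y; simp [TensorProduct.sub_tmul]

open TensorProduct LinearMap in
private lemma rb_map_sub_right {K : Type*} [Field K] {M N P Q : Type*}
    [AddCommGroup M] [Module K M] [AddCommGroup N]
    [Module K N] [AddCommGroup P] [Module K P] [AddCommGroup Q] [Module K Q]
    (f : M →ₗ[K] P) (g h : N →ₗ[K] Q) :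
    TensorProduct.map f (g - h) = TensorProduct.map f g - TensorProduct.map f h := by
  apply TensorProduct.ext'; intro x y; simp [TensorProduct.tmul_sub]

open TensorProduct LinearMap in
private lemma rb_map_add_right {K : Type*} [Field K] {M N P Q : Type*}
    [AddCommGroup M] [Module K M] [AddCommGroup N]
    [Module K N] [AddCommGroup P] [Module K P] [AddCommGroup Q] [Module K Q]
    (f : M →ₗ[K] P) (g h : N →ₗ[K] Q) :
    TensorProduct.map f (g + h) = TensorProduct.map f g + TensorProduct.map f h :=
  TensorProduct.map_add_right f g h

open TensorProduct LinearMap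

set_option maxHeartbeats 2000000 in
/-- If (L, Δ, α) is a Hom-coassociative coalgebra with (α ⊗ α)∘Δ = Δ∘α,
φ_L is an α-coderivation of Δ, and R is a Rota-Baxter operator of weight −1 with
R∘α = α∘R and φ_L∘R = R∘φ_L, then Δ̃ = (R ⊗ 1)∘Δ − τ∘(1 ⊗ R)∘Δ − Δ makes
(L, Δ̃, φ_L, α) a Hom-pre-Lie CoDer pair. -/
theorem rotaBaxter_weight_neg_one_gives_homPreLieCoDerPair
    {K : Type*} [Field K] [CharZero K] {L : Type*} [AddCommGroup L] [Module K L]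
    (Δ : L →ₗ[K] L ⊗[K] L) (φL α R : L →ₗ[K] L)
    (hcoass : IsHomCoassociative Δ α)
    (hmult : TensorProduct.map α α ∘ₗ Δ = Δ ∘ₗ α)
    (hcoder : IsCoderivation Δ α φL)
    (hRB : IsRotaBaxterOp Δ R (-1 : K))
    (hRα : R ∘ₗ α = α ∘ₗ R)
    (hRφ : φL ∘ₗ R = R ∘ₗ φL) :
    IsHomPreLieCoDerPair
      (TensorProduct.map R (LinearMap.id : L →ₗ[K] L) ∘ₗ Δ
        - (TensorProduct.comm K L L).toLinearMap
            ∘ₗ TensorProduct.map (LinearMap.id : L →ₗ[K] L) R ∘ₗ Δ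
        - Δ) φL α := by
  unfold IsHomPreLieCoDerPair IsHomPreLieCoalgebra IsCoderivation
  unfold IsHomCoassociative at hcoass
  unfold IsRotaBaxterOp at hRB
  unfold IsCoderivation at hcoder
  refine ⟨?_, ?_⟩
  ·
    set a := (TensorProduct.assoc K L L L).toLinearMap with hadef
    set s12 := tau12 K L with hs12def
    set s23 := TensorProduct.map (LinearMap.id : L →ₗ[K] L) (TensorProduct.comm K L L).toLinearMap with hs23def
    set A := TensorProduct.map R (LinearMap.id : L →ₗ[K] L) ∘ₗ Δ with hA
    set B := (TensorProduct.comm K L L).toLinearMap ∘ₗ TensorProduct.map (LinearMap.id : L →ₗ[K] L) R ∘ₗ Δ with hB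
    set D := A - B - Δ with hD
    -- permutation facts
    have ax2 : a ∘ₗ TensorProduct.map (TensorProduct.comm K L L).toLinearMap
        (LinearMap.id : L →ₗ[K] L) = s12 ∘ₗ a := by
      ext x y z; simp [hs12def, tau12, hadef]
    have ax3 : a ∘ₗ (TensorProduct.comm K L (L ⊗[K] L)).toLinearMap = s23 ∘ₗ s12 := by
      ext x y z; simp [hs12def, tau12, hadef, hs23def]
    have ax4 : (TensorProduct.comm K (L ⊗[K] L) L).toLinearMap = s12 ∘ₗ s23 ∘ₗ a := by
      ext x y z; simp [hs12def, tau12, hadef, hs23def]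
    have ax9 : (s23 ∘ₗ s12) ∘ₗ s23 = (s12 ∘ₗ s23) ∘ₗ s12 := by
      ext x y z; simp [hs12def, tau12, hadef, hs23def]
    have s12s12 : s12 ∘ₗ s12 = LinearMap.id := by
      ext x y z; simp [hs12def, tau12]
    -- naturality helpers
    have assocNat : ∀ (f g h : L →ₗ[K] L) (Z : L →ₗ[K] (L ⊗[K] L) ⊗[K] L),
        a ∘ₗ (TensorProduct.map (TensorProduct.map f g) h ∘ₗ Z)
          = TensorProduct.map f (TensorProduct.map g h) ∘ₗ (a ∘ₗ Z) := by
      intro f g h Z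
      rw [← LinearMap.comp_assoc, hadef, ← TensorProduct.map_map_comp_assoc_eq,
        LinearMap.comp_assoc]
    have V2 : ∀ f g h : L →ₗ[K] L,
        a ∘ₗ (TensorProduct.map (TensorProduct.map f g ∘ₗ Δ) (h ∘ₗ α) ∘ₗ Δ)
          = TensorProduct.map (f ∘ₗ α) (TensorProduct.map g h ∘ₗ Δ) ∘ₗ Δ := by
      intro f g h
      rw [show TensorProduct.map (TensorProduct.map f g ∘ₗ Δ) (h ∘ₗ α)
            = TensorProduct.map (TensorProduct.map f g) h ∘ₗ TensorProduct.map Δ α from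
          TensorProduct.map_comp _ _ _ _,
        LinearMap.comp_assoc, assocNat, ← hcoass, ← LinearMap.comp_assoc,
        ← TensorProduct.map_comp]
    have V1 : ∀ f g : L →ₗ[K] L,
        a ∘ₗ (TensorProduct.map (TensorProduct.map f g ∘ₗ Δ) α ∘ₗ Δ)
          = TensorProduct.map (f ∘ₗ α) (TensorProduct.map g (LinearMap.id : L →ₗ[K] L) ∘ₗ Δ) ∘ₗ Δ := by
      intro f g
      rw [← V2 f g LinearMap.id, LinearMap.id_comp]
    have V3 : ∀ h : L →ₗ[K] L,
        a ∘ₗ (TensorProduct.map Δ (h ∘ₗ α) ∘ₗ Δ)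
          = TensorProduct.map α (TensorProduct.map (LinearMap.id : L →ₗ[K] L) h ∘ₗ Δ) ∘ₗ Δ := by
      intro h
      have h2 := V2 LinearMap.id LinearMap.id h
      rw [LinearMap.id_comp] at h2
      simpa [TensorProduct.map_id] using h2
    have M2 : ∀ (u : L →ₗ[K] L ⊗[K] L) (p : L →ₗ[K] L),
        a ∘ₗ (TensorProduct.map ((TensorProduct.comm K L L).toLinearMap ∘ₗ u) p ∘ₗ Δ)
          = s12 ∘ₗ (a ∘ₗ (TensorProduct.map u p ∘ₗ Δ)) := by
      intro u p
      rw [show TensorProduct.map ((TensorProduct.comm K L L).toLinearMap ∘ₗ u) p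
            = TensorProduct.map (TensorProduct.comm K L L).toLinearMap
                (LinearMap.id : L →ₗ[K] L) ∘ₗ TensorProduct.map u p by
          rw [← TensorProduct.map_comp, LinearMap.id_comp],
        ← LinearMap.comp_assoc, ← LinearMap.comp_assoc, ax2, LinearMap.comp_assoc,
        LinearMap.comp_assoc]
    have M3 : ∀ (p : L →ₗ[K] L) (u : L →ₗ[K] L ⊗[K] L),
        TensorProduct.map p ((TensorProduct.comm K L L).toLinearMap ∘ₗ u)
          = s23 ∘ₗ TensorProduct.map p u := by
      intro p u
      rw [hs23def, ← TensorProduct.map_comp, LinearMap.id_comp]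
    have commNat1 : ∀ (u : L →ₗ[K] L ⊗[K] L) (p : L →ₗ[K] L) (Z : L →ₗ[K] L ⊗[K] L),
        TensorProduct.map u p ∘ₗ ((TensorProduct.comm K L L).toLinearMap ∘ₗ Z)
          = (TensorProduct.comm K L (L ⊗[K] L)).toLinearMap ∘ₗ (TensorProduct.map p u ∘ₗ Z) := by
      intro u p Z
      rw [← LinearMap.comp_assoc, TensorProduct.map_comp_comm_eq, LinearMap.comp_assoc]
    have commNat2 : ∀ (u : L →ₗ[K] L ⊗[K] L) (p : L →ₗ[K] L) (Z : L →ₗ[K] L ⊗[K] L),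
        TensorProduct.map p u ∘ₗ ((TensorProduct.comm K L L).toLinearMap ∘ₗ Z)
          = (TensorProduct.comm K (L ⊗[K] L) L).toLinearMap ∘ₗ (TensorProduct.map u p ∘ₗ Z) := by
      intro u p Z
      rw [← LinearMap.comp_assoc, TensorProduct.map_comp_comm_eq, LinearMap.comp_assoc]
    -- the D∘R identity from the Rota-Baxter equation
    have hDR : D ∘ₗ R = TensorProduct.map R R ∘ₗ Δ
        - TensorProduct.map (LinearMap.id : L →ₗ[K] L) R ∘ₗ (Δ ∘ₗ R)
        - (TensorProduct.comm K L L).toLinearMap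
            ∘ₗ (TensorProduct.map (LinearMap.id : L →ₗ[K] L) R ∘ₗ (Δ ∘ₗ R)) := by
      have key : TensorProduct.map R (LinearMap.id : L →ₗ[K] L) ∘ₗ (Δ ∘ₗ R)
          = TensorProduct.map R R ∘ₗ Δ
            - TensorProduct.map (LinearMap.id : L →ₗ[K] L) R ∘ₗ (Δ ∘ₗ R) + Δ ∘ₗ R := by
        rw [hRB]; module
      rw [hD, hB, hA]
      simp only [LinearMap.sub_comp, LinearMap.comp_assoc, key]
      abel

    -- canonical pieces
    -- X1 := map (α∘R) (map R id ∘ Δ) ∘ Δ ; X2 := map (α∘R) Δ ∘ Δ ; X3 := map α Δ ∘ Δ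
    -- g2 := a ∘ (map (map id R ∘ (Δ∘R)) α ∘ Δ) ; g8 := map α (map R id ∘ Δ) ∘ Δ
    -- g11 := s23 ∘ (map (α∘R) (map id R ∘ Δ) ∘ Δ) ; g15 := s23 ∘ (map α (map id R ∘ Δ) ∘ Δ)
    -- u1 := s23∘s12∘ map α (map R id ∘ (Δ∘R)) ∘ Δ ; u2 := s23∘s12∘ map α (Δ∘R) ∘ Δ
    -- Y := s12∘s23∘s12∘ map α (map id R ∘ (Δ∘R)) ∘ Δ
    have h1 : a ∘ₗ (TensorProduct.map D α ∘ₗ A)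
        = TensorProduct.map (α ∘ₗ R) (TensorProduct.map R (LinearMap.id : L →ₗ[K] L) ∘ₗ Δ) ∘ₗ Δ
          - a ∘ₗ (TensorProduct.map
              (TensorProduct.map (LinearMap.id : L →ₗ[K] L) R ∘ₗ (Δ ∘ₗ R)) α ∘ₗ Δ)
          - s12 ∘ₗ (a ∘ₗ (TensorProduct.map
              (TensorProduct.map (LinearMap.id : L →ₗ[K] L) R ∘ₗ (Δ ∘ₗ R)) α ∘ₗ Δ)) := by
      rw [hA, show TensorProduct.map D α ∘ₗ (TensorProduct.map R (LinearMap.id : L →ₗ[K] L) ∘ₗ Δ)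
            = TensorProduct.map (D ∘ₗ R) α ∘ₗ Δ by
          rw [← LinearMap.comp_assoc, ← TensorProduct.map_comp, LinearMap.comp_id],
        hDR, rb_map_sub_left, rb_map_sub_left]
      simp only [LinearMap.sub_comp, LinearMap.comp_sub]
      rw [V1 R R, hRα, M2]
    have h2 : a ∘ₗ (TensorProduct.map D α ∘ₗ B)
        = (s23 ∘ₗ s12) ∘ₗ (TensorProduct.map α
              (TensorProduct.map R (LinearMap.id : L →ₗ[K] L) ∘ₗ (Δ ∘ₗ R)) ∘ₗ Δ)
          - (s23 ∘ₗ s12) ∘ₗ (TensorProduct.map α (Δ ∘ₗ R) ∘ₗ Δ)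
          - ((s12 ∘ₗ s23) ∘ₗ s12) ∘ₗ (TensorProduct.map α
              (TensorProduct.map (LinearMap.id : L →ₗ[K] L) R ∘ₗ (Δ ∘ₗ R)) ∘ₗ Δ) := by
      rw [hB, commNat1 D α, show TensorProduct.map α D
            ∘ₗ (TensorProduct.map (LinearMap.id : L →ₗ[K] L) R ∘ₗ Δ)
            = TensorProduct.map α (D ∘ₗ R) ∘ₗ Δ by
          rw [← LinearMap.comp_assoc, ← TensorProduct.map_comp, LinearMap.comp_id],
        hDR, rb_map_sub_right, rb_map_sub_right, hRB, M3]
      simp only [rb_map_add_right, TensorProduct.map_smul_right, LinearMap.comp_sub,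
        LinearMap.comp_add, LinearMap.sub_comp, LinearMap.add_comp, LinearMap.comp_smul,
        LinearMap.smul_comp]
      have ax3Nat : ∀ (Z : L →ₗ[K] L ⊗[K] (L ⊗[K] L)),
          a ∘ₗ ((TensorProduct.comm K L (L ⊗[K] L)).toLinearMap ∘ₗ Z)
            = s23 ∘ₗ (s12 ∘ₗ Z) := by
        intro Z; rw [← LinearMap.comp_assoc, ax3, LinearMap.comp_assoc]
      simp only [ax3Nat]
      simp only [← LinearMap.comp_assoc]
      rw [ax9]
      module
    have h3 : a ∘ₗ (TensorProduct.map D α ∘ₗ Δ)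
        = TensorProduct.map (α ∘ₗ R) Δ ∘ₗ Δ
          - s12 ∘ₗ (TensorProduct.map α
              (TensorProduct.map R (LinearMap.id : L →ₗ[K] L) ∘ₗ Δ) ∘ₗ Δ)
          - TensorProduct.map α Δ ∘ₗ Δ := by
      rw [hD, hA, hB, rb_map_sub_left, rb_map_sub_left]
      simp only [LinearMap.sub_comp, LinearMap.comp_sub]
      rw [V1 R LinearMap.id, hRα, M2, V1 LinearMap.id R, LinearMap.id_comp, ← hcoass]
      simp only [TensorProduct.map_id, LinearMap.id_comp]
    have h4 : TensorProduct.map α D ∘ₗ A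
        = TensorProduct.map (α ∘ₗ R) (TensorProduct.map R (LinearMap.id : L →ₗ[K] L) ∘ₗ Δ) ∘ₗ Δ
          - s23 ∘ₗ (TensorProduct.map (α ∘ₗ R)
              (TensorProduct.map (LinearMap.id : L →ₗ[K] L) R ∘ₗ Δ) ∘ₗ Δ)
          - TensorProduct.map (α ∘ₗ R) Δ ∘ₗ Δ := by
      rw [hA, show TensorProduct.map α D ∘ₗ (TensorProduct.map R (LinearMap.id : L →ₗ[K] L) ∘ₗ Δ)
            = TensorProduct.map (α ∘ₗ R) D ∘ₗ Δ by
          rw [← LinearMap.comp_assoc, ← TensorProduct.map_comp, LinearMap.comp_id],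
        hD, hA, hB, rb_map_sub_right, rb_map_sub_right, M3]
      simp only [LinearMap.sub_comp, LinearMap.comp_assoc]
    have h5 : TensorProduct.map α D ∘ₗ B
        = s12 ∘ₗ (s23 ∘ₗ (TensorProduct.map (α ∘ₗ R)
              (TensorProduct.map (LinearMap.id : L →ₗ[K] L) R ∘ₗ Δ) ∘ₗ Δ))
          - ((s12 ∘ₗ s23) ∘ₗ s12) ∘ₗ (TensorProduct.map α
              (TensorProduct.map (LinearMap.id : L →ₗ[K] L) R ∘ₗ (Δ ∘ₗ R)) ∘ₗ Δ)
          - s12 ∘ₗ ((s23 ∘ₗ s12) ∘ₗ (TensorProduct.map α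
              (TensorProduct.map R (LinearMap.id : L →ₗ[K] L) ∘ₗ (Δ ∘ₗ R)) ∘ₗ Δ))
          + s12 ∘ₗ ((s23 ∘ₗ s12) ∘ₗ (TensorProduct.map α (Δ ∘ₗ R) ∘ₗ Δ))
          - s12 ∘ₗ (s23 ∘ₗ (TensorProduct.map α
              (TensorProduct.map (LinearMap.id : L →ₗ[K] L) R ∘ₗ Δ) ∘ₗ Δ)) := by
      have p1 : a ∘ₗ (TensorProduct.map (TensorProduct.map R (LinearMap.id : L →ₗ[K] L) ∘ₗ Δ)
            (α ∘ₗ R) ∘ₗ Δ)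
          = TensorProduct.map (α ∘ₗ R)
              (TensorProduct.map (LinearMap.id : L →ₗ[K] L) R ∘ₗ Δ) ∘ₗ Δ := by
        rw [← hRα, V2 R LinearMap.id R]
      have p2 : a ∘ₗ (TensorProduct.map ((TensorProduct.comm K L L).toLinearMap
            ∘ₗ (TensorProduct.map (LinearMap.id : L →ₗ[K] L) R ∘ₗ Δ)) (α ∘ₗ R) ∘ₗ Δ)
          = s12 ∘ₗ (TensorProduct.map α (TensorProduct.map R R ∘ₗ Δ) ∘ₗ Δ) := by
        rw [M2, ← hRα, V2 LinearMap.id R R, LinearMap.id_comp]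
      have p3 : a ∘ₗ (TensorProduct.map Δ (α ∘ₗ R) ∘ₗ Δ)
          = TensorProduct.map α
              (TensorProduct.map (LinearMap.id : L →ₗ[K] L) R ∘ₗ Δ) ∘ₗ Δ := by
        rw [← hRα, V3 R]
      rw [hB, commNat2 D α, show TensorProduct.map D α
            ∘ₗ (TensorProduct.map (LinearMap.id : L →ₗ[K] L) R ∘ₗ Δ)
            = TensorProduct.map D (α ∘ₗ R) ∘ₗ Δ by
          rw [← LinearMap.comp_assoc, ← TensorProduct.map_comp, LinearMap.comp_id],
        ax4, hD, hA, hB, rb_map_sub_left, rb_map_sub_left]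
      simp only [LinearMap.sub_comp, LinearMap.comp_sub, LinearMap.comp_assoc]
      rw [p1, p2, p3, hRB]
      simp only [rb_map_add_right, TensorProduct.map_smul_right, LinearMap.comp_sub,
        LinearMap.comp_add, LinearMap.sub_comp, LinearMap.add_comp, LinearMap.comp_smul,
        LinearMap.smul_comp, LinearMap.comp_assoc]
      module
    have h6 : TensorProduct.map α D ∘ₗ Δ
        = TensorProduct.map α (TensorProduct.map R (LinearMap.id : L →ₗ[K] L) ∘ₗ Δ) ∘ₗ Δ
          - s23 ∘ₗ (TensorProduct.map α
              (TensorProduct.map (LinearMap.id : L →ₗ[K] L) R ∘ₗ Δ) ∘ₗ Δ)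
          - TensorProduct.map α Δ ∘ₗ Δ := by
      rw [hD, hA, hB, rb_map_sub_right, rb_map_sub_right, M3]
      simp only [LinearMap.sub_comp, LinearMap.comp_assoc]
    have hsplit : a ∘ₗ TensorProduct.map D α ∘ₗ D - TensorProduct.map α D ∘ₗ D
        = (a ∘ₗ (TensorProduct.map D α ∘ₗ A) - a ∘ₗ (TensorProduct.map D α ∘ₗ B)
            - a ∘ₗ (TensorProduct.map D α ∘ₗ Δ))
          - (TensorProduct.map α D ∘ₗ A - TensorProduct.map α D ∘ₗ B
            - TensorProduct.map α D ∘ₗ Δ) := by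
      nth_rewrite 2 4 [hD]
      simp only [LinearMap.comp_sub, LinearMap.sub_comp]
    rw [LinearMap.sub_comp, LinearMap.id_comp, hsplit, h1, h2, h3, h4, h5, h6]
    simp only [LinearMap.comp_sub, LinearMap.comp_add, ← LinearMap.comp_assoc, s12s12,
      LinearMap.id_comp]
    abel
  ·
    have swap : ∀ p q : L →ₗ[K] L, ∀ X : L →ₗ[K] L ⊗[K] L,
        (TensorProduct.comm K L L).toLinearMap ∘ₗ (TensorProduct.map p q ∘ₗ X)
          = TensorProduct.map q p ∘ₗ ((TensorProduct.comm K L L).toLinearMap ∘ₗ X) := by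
      intro p q X
      rw [← LinearMap.comp_assoc, ← LinearMap.comp_assoc, (TensorProduct.map_comp_comm_eq q p).symm]
    have cmt : ∀ p q p' q' : L →ₗ[K] L, p' ∘ₗ p = p ∘ₗ p' → q' ∘ₗ q = q ∘ₗ q' →
        ∀ X : L →ₗ[K] L ⊗[K] L,
        TensorProduct.map p q ∘ₗ (TensorProduct.map p' q' ∘ₗ X)
          = TensorProduct.map p' q' ∘ₗ (TensorProduct.map p q ∘ₗ X) := by
      intro p q p' q' h1 h2 X
      rw [← LinearMap.comp_assoc, ← TensorProduct.map_comp, ← h1, ← h2, TensorProduct.map_comp,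
        LinearMap.comp_assoc]
    simp only [LinearMap.sub_comp, LinearMap.comp_sub, LinearMap.comp_assoc, hcoder,
      LinearMap.comp_add, LinearMap.add_comp]
    simp only [cmt R LinearMap.id φL α (by rw [hRφ]) (by simp),
        cmt R LinearMap.id α φL (by rw [hRα]) (by simp),
        cmt LinearMap.id R φL α (by simp) (by rw [hRα]),
        cmt LinearMap.id R α φL (by simp) (by rw [hRφ]),
        swap]
    abel
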